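/- Let X be a topological vector space and T : X → X a continuous linear operator. If T is power bounded, i.e. the family (T^n)_{n≥0} is equicontinuous, then the sets URec(T), FRec(T), UFRec(T), RRec(T) and Rec(T) of uniformly recurrent, frequently recurrent, upper frequently recurrent, reiteratively recurrent and recurrent vectors, respectively, are closed in X. -/

import Mathlib

open Filter Topology Set

noncomputable def lowerDensity (A : Set ℕ) : ℝ :=
  Filter.atTop.liminf fun N : ℕ => ((A ∩ Set.Iic N).ncard : ℝ) / (N + 1)

noncomputable def upperDensity (A : Set ℕ) : ℝ :=
  Filter.atTop.limsup fun N : ℕ => ((A ∩ Set.Iic N).ncard : ℝ) / (N + 1)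

noncomputable def upperBanachDensity (A : Set ℕ) : ℝ :=
  Filter.atTop.limsup fun N : ℕ =>
    ⨆ m : ℕ, (((A ∩ Set.Icc m (m + N)).ncard : ℝ) / (N + 1))

/-- A set of naturals is syndetic if it has bounded gaps. -/
def Syndetic (A : Set ℕ) : Prop :=
  ∃ m : ℕ, ∀ n : ℕ, ∃ k ∈ A, n ≤ k ∧ k < n + m

/-- A set of naturals is an IP-set if it contains all finite sums of distinct terms of some
strictly increasing sequence of positive integers. -/
def IsIPSet (A : Set ℕ) : Prop :=
  ∃ k : ℕ → ℕ, StrictMono k ∧ (∀ i, 0 < k i) ∧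
    ∀ s : Finset ℕ, s.Nonempty → (∑ j ∈ s, k j) ∈ A

/-- A set of naturals is an IP*-set if it meets every IP-set. -/
def IsIPStarSet (A : Set ℕ) : Prop :=
  ∀ B : Set ℕ, IsIPSet B → (A ∩ B).Nonempty

/-- The return set N(x,U) = {n : T^n x ∈ U}. -/
def returnSet {X : Type*} (T : X → X) (x : X) (U : Set X) : Set ℕ :=
  {n : ℕ | T^[n] x ∈ U}

def IsRecurrentVec {X : Type*} [TopologicalSpace X] (T : X → X) (x : X) : Prop :=
  ∀ U ∈ nhds x, (returnSet T x U).Infinite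

def IsUniformlyRecurrentVec {X : Type*} [TopologicalSpace X] (T : X → X) (x : X) : Prop :=
  ∀ U ∈ nhds x, Syndetic (returnSet T x U)

def IsFrequentlyRecurrentVec {X : Type*} [TopologicalSpace X] (T : X → X) (x : X) : Prop :=
  ∀ U ∈ nhds x, 0 < lowerDensity (returnSet T x U)

def IsUpperFrequentlyRecurrentVec {X : Type*} [TopologicalSpace X] (T : X → X) (x : X) : Prop :=
  ∀ U ∈ nhds x, 0 < upperDensity (returnSet T x U)

def IsReiterativelyRecurrentVec {X : Type*} [TopologicalSpace X] (T : X → X) (x : X) : Prop :=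
  ∀ U ∈ nhds x, 0 < upperBanachDensity (returnSet T x U)

def IsIPStarRecurrentVec {X : Type*} [TopologicalSpace X] (T : X → X) (x : X) : Prop :=
  ∀ U ∈ nhds x, IsIPStarSet (returnSet T x U)

def IsHypercyclicVec {X : Type*} [TopologicalSpace X] (T : X → X) (x : X) : Prop :=
  Dense (Set.range fun n : ℕ => T^[n] x)

def IsFrequentlyHypercyclicVec {X : Type*} [TopologicalSpace X] (T : X → X) (x : X) : Prop :=
  ∀ U : Set X, IsOpen U → U.Nonempty → 0 < lowerDensity (returnSet T x U)

def IsUpperFrequentlyHypercyclicVec {X : Type*} [TopologicalSpace X] (T : X → X) (x : X) : Prop :=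
  ∀ U : Set X, IsOpen U → U.Nonempty → 0 < upperDensity (returnSet T x U)

def IsReiterativelyHypercyclicVec {X : Type*} [TopologicalSpace X] (T : X → X) (x : X) : Prop :=
  ∀ U : Set X, IsOpen U → U.Nonempty → 0 < upperBanachDensity (returnSet T x U)

/-- Power boundedness: the iterates form an equicontinuous family (at zero). -/
def PowerBounded {X : Type*} [Zero X] [TopologicalSpace X] (T : X → X) : Prop :=
  ∀ W₁ ∈ nhds (0 : X), ∃ W₂ ∈ nhds (0 : X), ∀ n : ℕ, ∀ x ∈ W₂, T^[n] x ∈ W₁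

/-- The cut-shift-and-paste property for a family of subsets of ℕ. -/
def CuSP (F : Set ℕ → Prop) : Prop :=
  ∀ q : ℕ, 0 < q → ∀ I : Fin q → Set ℕ, (⋃ j, I j) = Set.univ →
    ∀ shift : Fin q → ℕ, ∀ A : Set ℕ, F A →
      F (⋃ j, (fun k => shift j + k) '' (A ∩ I j))


/-! If `y` is close to `x`, power boundedness keeps `T^n y - T^n x = T^n (y - x)` small uniformly
in `n`, so every return time of `y` to a small neighbourhood of `y` is a return time of `x` to a
given neighbourhood `U` of `x`. Hence, for any upward closed property of sets of return times
(syndetic, positive lower, upper or upper Banach density, infinite), the vectors all of whose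
return sets have it form a closed set. -/

theorem Syndetic.mono {A B : Set ℕ} (hAB : A ⊆ B) (hA : Syndetic A) : Syndetic B := by
  obtain ⟨m, hm⟩ := hA
  refine ⟨m, fun n => ?_⟩
  obtain ⟨k, hk, hnk, hkm⟩ := hm n
  exact ⟨k, hAB hk, hnk, hkm⟩

theorem ncard_inter_Iic_div_le_one (A : Set ℕ) (N : ℕ) :
    ((A ∩ Iic N).ncard : ℝ) / (N + 1) ≤ 1 := by
  rw [div_le_one (by positivity)]
  exact_mod_cast (ncard_le_ncard inter_subset_right (finite_Iic N)).trans_eq (ncard_Iic_nat N)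

theorem ncard_inter_Icc_div_le_one (A : Set ℕ) (m N : ℕ) :
    ((A ∩ Icc m (m + N)).ncard : ℝ) / (N + 1) ≤ 1 := by
  rw [div_le_one (by positivity)]
  have h := (ncard_le_ncard (inter_subset_right (s := A)) (finite_Icc m (m + N))).trans_eq
    (ncard_Icc_nat _ _)
  exact_mod_cast h.trans_eq (by omega)

theorem ncard_inter_div_mono {A B S : Set ℕ} (hAB : A ⊆ B) (hS : S.Finite) (N : ℕ) :
    ((A ∩ S).ncard : ℝ) / (N + 1) ≤ ((B ∩ S).ncard : ℝ) / (N + 1) := by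
  gcongr
  exact hS.inter_of_right _

theorem lowerDensity_mono : Monotone lowerDensity := fun A B hAB =>
  liminf_le_liminf (.of_forall fun N => ncard_inter_div_mono hAB (finite_Iic N) N)
    (isBoundedUnder_of ⟨0, fun N => by positivity⟩)
    (isBoundedUnder_of ⟨1, ncard_inter_Iic_div_le_one B⟩).isCoboundedUnder_ge

theorem upperDensity_mono : Monotone upperDensity := fun A B hAB =>
  limsup_le_limsup (.of_forall fun N => ncard_inter_div_mono hAB (finite_Iic N) N)
    (isBoundedUnder_of ⟨0, fun N => by positivity⟩).isCoboundedUnder_le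
    (isBoundedUnder_of ⟨1, ncard_inter_Iic_div_le_one B⟩)

theorem upperBanachDensity_mono : Monotone upperBanachDensity := by
  intro A B hAB
  have hbdd (C : Set ℕ) (N : ℕ) :
      BddAbove (range fun m : ℕ => ((C ∩ Icc m (m + N)).ncard : ℝ) / (N + 1)) :=
    ⟨1, forall_mem_range.2 fun m => ncard_inter_Icc_div_le_one C m N⟩
  refine limsup_le_limsup (.of_forall fun N =>
      ciSup_mono (hbdd B N) fun m => ncard_inter_div_mono hAB (finite_Icc _ _) N) ?_ ?_
  · exact (isBoundedUnder_of ⟨0, fun N =>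
      le_ciSup_of_le (hbdd A N) 0 (by positivity)⟩).isCoboundedUnder_le
  · exact isBoundedUnder_of ⟨1, fun N => ciSup_le fun m => ncard_inter_Icc_div_le_one B m N⟩

theorem exists_nhds_zero_forall_sub_add_mem {X : Type*} [AddCommGroup X] [TopologicalSpace X]
    [IsTopologicalAddGroup X] {U : Set X} (hU : U ∈ 𝓝 0) :
    ∃ W ∈ 𝓝 (0 : X), ∀ a ∈ W, ∀ b ∈ W, ∀ c ∈ W, a - b + c ∈ U := by
  have hcont : Continuous fun p : X × X × X => p.1 - p.2.1 + p.2.2 := by fun_prop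
  have hmem := hcont.tendsto' 0 0 (by simp) hU
  rw [nhds_prod_eq, nhds_prod_eq] at hmem
  obtain ⟨A, hA, BC, hBC, hABC⟩ := mem_prod_iff.1 hmem
  obtain ⟨B, hB, C, hC, hBC⟩ := mem_prod_iff.1 hBC
  exact ⟨A ∩ B ∩ C, inter_mem (inter_mem hA hB) hC,
    fun a ha b hb c hc => @hABC (a, b, c) ⟨ha.1.1, hBC ⟨hb.1.2, hc.2⟩⟩⟩

theorem PowerBounded.isClosed_setOf_forall_nhds_returnSet {X F : Type*} [AddCommGroup X]
    [TopologicalSpace X] [IsTopologicalAddGroup X] [FunLike F X X] [AddMonoidHomClass F X X]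
    {T : F} (hT : PowerBounded T) {P : Set ℕ → Prop} (hP : Monotone P) :
    IsClosed {x | ∀ U ∈ 𝓝 x, P (returnSet T x U)} := by
  refine isClosed_of_closure_subset fun x hx U hU => ?_
  obtain ⟨W, hW, hWU⟩ := exists_nhds_zero_forall_sub_add_mem
    ((continuous_const_add x).tendsto' 0 x (add_zero x) hU)
  obtain ⟨W₂, hW₂, hTW₂⟩ := hT W hW
  obtain ⟨y, hyx, hy⟩ := mem_closure_iff_nhds.1 hx _
    ((continuous_sub_right x).tendsto' x 0 (sub_self x) (inter_mem hW₂ hW))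
  refine hP (fun n hn => ?_) (hy _ ((continuous_sub_right y).tendsto' y 0 (sub_self y) hW))
  -- `T^n x - x = (T^n y - y) - T^n (y - x) + (y - x)`, with all three terms in `W`.
  have h := hWU _ hn _ (hTW₂ n _ hyx.1) _ hyx.2
  simpa [returnSet, iterate_map_sub] using h

theorem stmt7_general {𝕜 : Type*} [RCLike 𝕜] {X : Type*} [AddCommGroup X] [Module 𝕜 X]
    [TopologicalSpace X] [IsTopologicalAddGroup X] (T : X →L[𝕜] X) (h : PowerBounded (⇑T)) :
    IsClosed {x : X | IsUniformlyRecurrentVec (⇑T) x} ∧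
    IsClosed {x : X | IsFrequentlyRecurrentVec (⇑T) x} ∧
    IsClosed {x : X | IsUpperFrequentlyRecurrentVec (⇑T) x} ∧
    IsClosed {x : X | IsReiterativelyRecurrentVec (⇑T) x} ∧
    IsClosed {x : X | IsRecurrentVec (⇑T) x} :=
  ⟨h.isClosed_setOf_forall_nhds_returnSet fun _ _ => Syndetic.mono,
    h.isClosed_setOf_forall_nhds_returnSet (P := (0 < lowerDensity ·))
      fun _ _ hAB hA => hA.trans_le (lowerDensity_mono hAB),
    h.isClosed_setOf_forall_nhds_returnSet (P := (0 < upperDensity ·))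
      fun _ _ hAB hA => hA.trans_le (upperDensity_mono hAB),
    h.isClosed_setOf_forall_nhds_returnSet (P := (0 < upperBanachDensity ·))
      fun _ _ hAB hA => hA.trans_le (upperBanachDensity_mono hAB),
    h.isClosed_setOf_forall_nhds_returnSet fun _ _ => Set.Infinite.mono⟩

theorem stmt7 {𝕜 : Type*} [RCLike 𝕜] {X : Type*} [AddCommGroup X] [Module 𝕜 X]
    [TopologicalSpace X] [IsTopologicalAddGroup X] [ContinuousSMul 𝕜 X] (T : X →L[𝕜] X) (h : PowerBounded (⇑T)) :
    IsClosed {x : X | IsUniformlyRecurrentVec (⇑T) x} ∧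
    IsClosed {x : X | IsFrequentlyRecurrentVec (⇑T) x} ∧
    IsClosed {x : X | IsUpperFrequentlyRecurrentVec (⇑T) x} ∧
    IsClosed {x : X | IsReiterativelyRecurrentVec (⇑T) x} ∧
    IsClosed {x : X | IsRecurrentVec (⇑T) x} :=
  stmt7_general T h
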